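/- arXiv:2309.07070 — 2 statements merged into one kernel-verified Lean document; each statement's English description precedes it below -/
import Mathlib

section
/- For every n ≥ 1, the minimal forbidden word M_n of the Fibonacci word is a palindrome of length F_n (the n-th Fibonacci number), where M_{2n+1} = 1·p_{2n+1}·1 and M_{2n+2} = 0·p_{2n+2}·0. -/
/-- The Fibonacci morphism: `false` (=0) ↦ 01, `true` (=1) ↦ 0. -/
def phi (w : List Bool) : List Bool :=
  w.flatMap (fun b => if b then [false] else [false, true])

/-- The Fibonacci words: f₁ = 1, f₂ = 0, f_{n+2} = f_{n+1} f_n. -/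
def fw : ℕ → List Bool
  | 0 => []
  | 1 => [true]
  | 2 => [false]
  | (n+3) => fw (n+2) ++ fw (n+1)

/-- Palindromic prefix: f_n with its last two letters removed. -/
def pw (n : ℕ) : List Bool := (fw n).dropLast.dropLast

/-- Minimal forbidden words of the Fibonacci word:
`M_{2n+1} = 1 p_{2n+1} 1`, `M_{2n+2} = 0 p_{2n+2} 0`. -/
def Mw (n : ℕ) : List Bool :=
  if n % 2 = 0 then false :: (pw n ++ [false]) else true :: (pw n ++ [true])

/-- Correlation bit: `corr u v k` holds iff `C_{u,v}[k] = 1`. -/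
def corr {α : Type*} (u v : List α) (k : ℕ) : Prop :=
  ∀ i j : ℕ, i < u.length → j < v.length → i = j + k → u[i]? = v[j]?

/-- A border of a word is both a prefix and a suffix. -/
def IsBorder {α : Type*} (b w : List α) : Prop := b <+: w ∧ b <:+ w

/-- The set of nonempty borders of `M_n`. -/
def Bset (n : ℕ) : Set (List Bool) := {b | b ≠ [] ∧ IsBorder b (Mw n)}

open scoped Classical in
/-- The correlation polynomial `C_{u,v}(z) = ∑_{k<|u|} C_{u,v}[k] z^{|u|-1-k}`. -/
noncomputable def corrPoly (u v : List Bool) : Polynomial ℤ :=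
  ∑ k ∈ Finset.range u.length,
    if corr u v k then Polynomial.X ^ (u.length - 1 - k) else 0

open scoped Classical in
/-- The nonempty borders of `w`, as a finset. -/
noncomputable def borderFinset (w : List Bool) : Finset (List Bool) :=
  ((Finset.range (w.length + 1)).image (fun k => w.take k)).filter
    (fun b => b ≠ [] ∧ b <:+ w)

/-!
The words `f_{n+1} f_n` and `f_n f_{n+1}` agree except in their last two letters. Hence
`p_{n+2} = f_{n+1} p_n = f_n p_{n+1}`. Writing `f_n = p_n t_n`, the two-letter tails `t_n`
alternate between `01` and `10`, so `t_{n+1}` reversed is `t_n`; reversing the first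
factorisation of `p_{n+2}` and using the induction hypothesis gives
`p_n t_n p_{n+1} = f_n p_{n+1}`, the second one. So every `p_n` is a palindrome, and then so is
`M_n`, whose length is `|p_n| + 2 = F_n`.
-/

theorem List.dropLast_dropLast_append {α : Type*} (a l : List α) (h : 2 ≤ l.length) :
    (a ++ l).dropLast.dropLast = a ++ l.dropLast.dropLast := by
  have hl : l ≠ [] := by rintro rfl; simp at h
  have hl' : l.dropLast ≠ [] := by rw [← List.length_pos_iff, List.length_dropLast]; omega
  rw [List.dropLast_append_of_ne_nil hl, List.dropLast_append_of_ne_nil hl']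

theorem fw_add_three (n : ℕ) : fw (n + 3) = fw (n + 2) ++ fw (n + 1) := rfl

theorem length_fw (n : ℕ) : (fw n).length = Nat.fib n := by
  induction n using Nat.strong_induction_on with
  | _ n ih =>
    match n with
    | 0 | 1 | 2 => rfl
    | m + 3 =>
      rw [fw_add_three, List.length_append, ih (m + 2) (by omega), ih (m + 1) (by omega),
        Nat.add_comm, ← Nat.fib_add_two]

theorem two_le_fib {n : ℕ} (hn : 3 ≤ n) : 2 ≤ Nat.fib n :=
  Nat.fib_mono hn

theorem two_le_length_fw {n : ℕ} (hn : 3 ≤ n) : 2 ≤ (fw n).length :=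
  length_fw n ▸ two_le_fib hn

theorem dropLast_dropLast_fw_append_comm (n : ℕ) :
    (fw (n + 1) ++ fw (n + 2)).dropLast.dropLast =
      (fw (n + 2) ++ fw (n + 1)).dropLast.dropLast := by
  induction n with
  | zero => rfl
  | succ m ih =>
    have h' : 2 ≤ (fw (m + 2) ++ fw (m + 1)).length := two_le_length_fw (n := m + 3) (by omega)
    have h : 2 ≤ (fw (m + 1) ++ fw (m + 2)).length := by
      rwa [List.length_append, Nat.add_comm, ← List.length_append]
    rw [fw_add_three, List.append_assoc, List.dropLast_dropLast_append _ _ h,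
      List.dropLast_dropLast_append _ _ h', ih]

theorem pw_add_two_eq_fw_append_pw {n : ℕ} (hn : 3 ≤ n) : pw (n + 2) = fw (n + 1) ++ pw n := by
  obtain ⟨m, rfl⟩ : ∃ m, n = m + 3 := ⟨n - 3, by omega⟩
  exact List.dropLast_dropLast_append _ _ (two_le_length_fw hn)

theorem pw_add_two_eq_fw_append_pw_succ {n : ℕ} (hn : 2 ≤ n) :
    pw (n + 2) = fw n ++ pw (n + 1) := by
  obtain ⟨m, rfl⟩ : ∃ m, n = m + 2 := ⟨n - 2, by omega⟩
  rw [pw, fw_add_three, ← dropLast_dropLast_fw_append_comm,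
    List.dropLast_dropLast_append _ _ (two_le_length_fw (by omega)), pw]

/-- The last two letters of `f_n` for `n ≥ 3`. -/
def fibTail (n : ℕ) : List Bool := if Even n then [true, false] else [false, true]

theorem reverse_fibTail_succ (n : ℕ) : (fibTail (n + 1)).reverse = fibTail n := by
  by_cases h : Even n <;> simp [fibTail, Nat.even_add_one, h]

theorem fibTail_add_two (n : ℕ) : fibTail (n + 2) = fibTail n := by
  simp [fibTail, Nat.even_add_one]

theorem fw_eq_pw_append_fibTail {n : ℕ} (hn : 3 ≤ n) : fw n = pw n ++ fibTail n := by
  induction n using Nat.strong_induction_on with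
  | _ n ih =>
    match n, hn with
    | 3, _ | 4, _ => decide
    | m + 5, _ =>
      rw [pw_add_two_eq_fw_append_pw (by omega), fibTail_add_two (m + 3), List.append_assoc,
        ← ih (m + 3) (by omega) (by omega), fw_add_three]

theorem reverse_pw (n : ℕ) : (pw n).reverse = pw n := by
  induction n using Nat.strong_induction_on with
  | _ n ih =>
    match n with
    | 0 | 1 | 2 | 3 | 4 => decide
    | m + 5 =>
      calc (pw (m + 5)).reverse
          = (pw (m + 3)).reverse ++ (pw (m + 4) ++ fibTail (m + 4)).reverse := by
            rw [pw_add_two_eq_fw_append_pw (n := m + 3) (by omega), List.reverse_append,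
              fw_eq_pw_append_fibTail (by omega)]
        _ = (pw (m + 3) ++ fibTail (m + 3)) ++ pw (m + 4) := by
            rw [List.reverse_append, reverse_fibTail_succ, ih (m + 3) (by omega),
              ih (m + 4) (by omega), List.append_assoc]
        _ = pw (m + 5) := by
            rw [← fw_eq_pw_append_fibTail (by omega),
              pw_add_two_eq_fw_append_pw_succ (n := m + 3) (by omega)]

theorem length_pw (n : ℕ) : (pw n).length = Nat.fib n - 2 := by
  simp only [pw, List.length_dropLast, length_fw]
  omega

theorem reverse_Mw (n : ℕ) : (Mw n).reverse = Mw n := by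
  unfold Mw
  split_ifs <;> simp [reverse_pw]

theorem length_Mw {n : ℕ} (hn : 3 ≤ n) : (Mw n).length = Nat.fib n := by
  have := two_le_fib hn
  unfold Mw
  split_ifs <;> simp [length_pw] <;> omega

theorem stmt3 (n : ℕ) (hn : 1 ≤ n) :
    (Mw (2*n+1)).reverse = Mw (2*n+1) ∧ (Mw (2*n+1)).length = Nat.fib (2*n+1) ∧
    (Mw (2*n+2)).reverse = Mw (2*n+2) ∧ (Mw (2*n+2)).length = Nat.fib (2*n+2) :=
  ⟨reverse_Mw _, length_Mw (by omega), reverse_Mw _, length_Mw (by omega)⟩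
end

section
/- For every n ≥ 1, 0·(1·p_{2n+2}·1) = φ(0·p_{2n+1}·0), i.e., φ(0·p_{2n+1}·0) equals 0 followed by 1·p_{2n+2}·1. -/
/-!
Since `φ(f_k) = f_{k+1}` and, for `n ≥ 1`, `f_{2n+1}` ends in `01` while `f_{2n+2}` ends in `10`,
applying `φ` to `f_{2n+1} = p_{2n+1} 01` gives `φ(p_{2n+1}) 010 = p_{2n+2} 10`, that is
`p_{2n+2} 1 = φ(p_{2n+1}) 01`. Hence `φ(0 p_{2n+1} 0) = 01 φ(p_{2n+1}) 01 = 01 p_{2n+2} 1`.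
-/

@[simp]
lemma phi_append (u v : List Bool) : phi (u ++ v) = phi u ++ phi v :=
  List.flatMap_append

lemma phi_fw : ∀ n, phi (fw (n + 1)) = fw (n + 2)
  | 0 => rfl
  | 1 => rfl
  | n + 2 => by
    change phi (fw (n + 2) ++ fw (n + 1)) = fw (n + 3) ++ fw (n + 2)
    rw [phi_append, phi_fw (n + 1), phi_fw n]

lemma fw_isSuffix_fw_add_two (n : ℕ) : fw (n + 1) <:+ fw (n + 3) :=
  List.suffix_append _ _

lemma isSuffix_fw_odd : ∀ n, [false, true] <:+ fw (2 * n + 3)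
  | 0 => List.suffix_refl _
  | n + 1 => by
    rw [show 2 * (n + 1) + 3 = 2 * n + 2 + 3 by ring]
    exact (isSuffix_fw_odd n).trans (fw_isSuffix_fw_add_two (2 * n + 2))

lemma isSuffix_fw_even : ∀ n, [true, false] <:+ fw (2 * n + 4)
  | 0 => ⟨[false], rfl⟩
  | n + 1 => by
    rw [show 2 * (n + 1) + 4 = 2 * n + 3 + 3 by ring]
    exact (isSuffix_fw_even n).trans (fw_isSuffix_fw_add_two (2 * n + 3))

lemma pw_of_fw_eq {n : ℕ} {u : List Bool} {a b : Bool} (h : fw n = u ++ [a, b]) :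
    pw n = u := by
  simp [pw, h]

lemma pw_even_concat_true (n : ℕ) :
    pw (2 * n + 4) ++ [true] = phi (pw (2 * n + 3)) ++ [false, true] := by
  obtain ⟨u, hu⟩ := isSuffix_fw_odd n
  obtain ⟨v, hv⟩ := isSuffix_fw_even n
  have hφ : v ++ [true, false] = phi u ++ [false, true, false] := by
    rw [hv, ← phi_fw (2 * n + 2), ← hu, phi_append]
    rfl
  rw [pw_of_fw_eq hu.symm, pw_of_fw_eq hv.symm]
  simpa using congrArg List.dropLast hφ

theorem stmt5 (n : ℕ) (hn : 1 ≤ n) :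
    false :: (true :: (pw (2*n+2) ++ [true]))
      = phi (false :: (pw (2*n+1) ++ [false])) := by
  obtain ⟨m, rfl⟩ : ∃ m, n = m + 1 := ⟨n - 1, by omega⟩
  have hphi : phi (false :: (pw (2 * m + 3) ++ [false]))
      = false :: true :: (phi (pw (2 * m + 3)) ++ [false, true]) := by
    simp [phi]
  rw [show 2 * (m + 1) + 2 = 2 * m + 4 by ring, show 2 * (m + 1) + 1 = 2 * m + 3 by ring,
    hphi, pw_even_concat_true]
end
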